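/- Suppose 0 ≤ i ≤ n−1, SUF[i] ≠ 0, and there exists j < i with BWT[j] = BWT[i]; let p = prev(i) be the largest such j. Then LCP[LF[i]] = 1 + min{ LCP[l] : p+1 ≤ l ≤ i }. -/

import Mathlib

/-- Length of the longest common prefix of two lists. -/
def lcpLen {α : Type*} [DecidableEq α] : List α → List α → ℕ
  | a :: u, b :: v => if a = b then lcpLen u v + 1 else 0
  | _, _ => 0

/-- The suffix of `S` starting at position `i` (as a list). -/
def sfx {α : Type*} {n : ℕ} (S : Fin n → α) (i : ℕ) : List α :=
  (List.ofFn S).drop i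
/-- Burrows–Wheeler transform: `BWT[i] = S[SUF[i]-1]` if `SUF[i] ≠ 0`,
    and the sentinel `S[n-1]` otherwise. -/
def bwtOf {α : Type*} {n : ℕ} (hn : 0 < n) (S : Fin n → α)
    (SUF : Equiv.Perm (Fin n)) (i : Fin n) : α :=
  if (SUF i : ℕ) = 0 then S ⟨n - 1, by omega⟩
  else S ⟨(SUF i : ℕ) - 1, lt_of_le_of_lt (Nat.sub_le _ _) (Fin.isLt _)⟩

/-- LF-mapping: `LF[i] = ISA[SUF[i]-1]` if `SUF[i] ≠ 0`, and `0` otherwise. -/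
def lfOf {n : ℕ} (hn : 0 < n) (SUF : Equiv.Perm (Fin n)) (i : Fin n) : Fin n :=
  if (SUF i : ℕ) = 0 then ⟨0, hn⟩
  else SUF.symm ⟨(SUF i : ℕ) - 1, lt_of_le_of_lt (Nat.sub_le _ _) (Fin.isLt _)⟩

/-!
Let `c = BWT[p] = BWT[i]`. Prepending `c` to the suffixes of ranks `p` and `i` gives the
suffixes of ranks `LF[p]` and `LF[i]`, so `LF[p] < LF[i]`. A suffix ranked strictly between
them also starts with `c`, and its tail is a suffix ranked strictly between `p` and `i`
whose `BWT` character is `c`, contradicting the maximality of `p`. Hence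
`LF[i] = LF[p] + 1` and `LCP[LF[i]] = 1 + lcp(S_{SUF[p]}, S_{SUF[i]})`; in a sorted list
of strings the lcp of two entries is the minimum of the lcps of the adjacent pairs between
them. The sentinel rules out `SUF[p] = 0`.
-/

section LCP

variable {α : Type*}

theorem lcpLen_nil_left [DecidableEq α] (w : List α) : lcpLen [] w = 0 := by
  cases w <;> rfl

theorem lcpLen_cons_self [DecidableEq α] (a : α) (u v : List α) :
    lcpLen (a :: u) (a :: v) = lcpLen u v + 1 := by
  simp [lcpLen]

theorem lcpLen_eq_min_of_lt_of_lt [LinearOrder α] {u v w : List α} (huv : u < v)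
    (hvw : v < w) : lcpLen u w = min (lcpLen u v) (lcpLen v w) := by
  induction u generalizing v w with
  | nil => simp [lcpLen_nil_left]
  | cons a u ih =>
    match v, w, huv, hvw with
    | [], _, huv, _ => exact absurd huv (List.not_lt_nil _)
    | _ :: _, [], _, hvw => exact absurd hvw (List.not_lt_nil _)
    | b :: v, c :: w, huv, hvw =>
      rw [List.cons_lt_cons_iff] at huv hvw
      rcases huv with hab | ⟨rfl, huv⟩ <;> rcases hvw with hbc | ⟨rfl, hvw⟩
      · simp [lcpLen, hab.ne, (hab.trans hbc).ne]
      · simp [lcpLen, hab.ne]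
      · simp [lcpLen, hbc.ne]
      · simp only [lcpLen_cons_self, ih huv hvw, min_add_add_right]

theorem lcpLen_eq_inf'_Icc [LinearOrder α] {n : ℕ} {g : Fin n → List α} (hg : StrictMono g)
    {LCP : ℕ → ℕ}
    (hLCP : ∀ l, 1 ≤ l → ∀ h2 : l < n,
      LCP l = lcpLen (g ⟨l - 1, Nat.sub_lt_of_lt h2⟩) (g ⟨l, h2⟩))
    {p i : ℕ} (hpi : p < i) (hi : i < n) :
    lcpLen (g ⟨p, hpi.trans hi⟩) (g ⟨i, hi⟩) =
      (Finset.Icc (p + 1) i).inf' (Finset.nonempty_Icc.mpr hpi) LCP := by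
  induction i, hpi using Nat.le_induction with
  | base => simp [hLCP (p + 1) (by omega) hi]
  | succ m hpm ih =>
    have hmn : m < n := by omega
    rw [lcpLen_eq_min_of_lt_of_lt (hg (Fin.mk_lt_mk.mpr hpm))
        (hg (Fin.mk_lt_mk.mpr m.lt_add_one)), ih hmn,
      Finset.inf'_congr _ (Finset.insert_Icc_right_eq_Icc_add_one (by omega)).symm
        (fun _ _ => rfl), Finset.inf'_insert, hLCP (m + 1) (by omega) hi, min_comm]
    rfl

end LCP

section Suffixes

variable {α : Type*} {n : ℕ}

theorem sfx_eq_cons (S : Fin n → α) {k : ℕ} (hk : k < n) :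
    sfx S k = S ⟨k, hk⟩ :: sfx S (k + 1) := by
  rw [sfx, List.drop_eq_getElem_cons (by simpa using hk)]
  simp [sfx]

theorem sfx_eq_nil_iff (S : Fin n → α) {k : ℕ} : sfx S k = [] ↔ n ≤ k := by
  simp [sfx]

end Suffixes

section BWT

variable {α : Type*} {n : ℕ} (hn : 0 < n) (S : Fin n → α) (SUF : Equiv.Perm (Fin n))
  {i : Fin n}

theorem bwtOf_of_eq_zero (hi0 : (SUF i : ℕ) = 0) :
    bwtOf hn S SUF i = S ⟨n - 1, Nat.sub_one_lt_of_lt hn⟩ :=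
  if_pos hi0

theorem bwtOf_of_ne_zero (hi0 : (SUF i : ℕ) ≠ 0) :
    bwtOf hn S SUF i = S ⟨SUF i - 1, by omega⟩ :=
  if_neg hi0

theorem val_apply_lfOf (hi0 : (SUF i : ℕ) ≠ 0) : (SUF (lfOf hn SUF i) : ℕ) = SUF i - 1 := by
  simp [lfOf, hi0]

theorem sfx_apply_lfOf (hi0 : (SUF i : ℕ) ≠ 0) :
    sfx S (SUF (lfOf hn SUF i)) = bwtOf hn S SUF i :: sfx S (SUF i) := by
  rw [val_apply_lfOf hn SUF hi0, sfx_eq_cons S (by omega), bwtOf_of_ne_zero hn S SUF hi0,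
    Nat.sub_add_cancel (Nat.one_le_iff_ne_zero.mpr hi0)]

theorem sentinel_lt_bwtOf [Preorder α]
    (hsent : ∀ k : Fin n, (k : ℕ) < n - 1 → S ⟨n - 1, Nat.sub_one_lt_of_lt hn⟩ < S k)
    (hi0 : (SUF i : ℕ) ≠ 0) : S ⟨n - 1, Nat.sub_one_lt_of_lt hn⟩ < bwtOf hn S SUF i := by
  rw [bwtOf_of_ne_zero hn S SUF hi0]
  exact hsent _ (show (SUF i : ℕ) - 1 < n - 1 by omega)

theorem val_apply_ne_zero_of_bwtOf_eq [Preorder α]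
    (hsent : ∀ k : Fin n, (k : ℕ) < n - 1 → S ⟨n - 1, Nat.sub_one_lt_of_lt hn⟩ < S k)
    (hi0 : (SUF i : ℕ) ≠ 0) {p : Fin n} (hpb : bwtOf hn S SUF p = bwtOf hn S SUF i) :
    (SUF p : ℕ) ≠ 0 := fun hp0 => by
  have hlt := sentinel_lt_bwtOf hn S SUF hsent hi0
  rw [← hpb, bwtOf_of_eq_zero hn S SUF hp0] at hlt
  exact lt_irrefl _ hlt

end BWT

section LF

variable {α : Type*} [LinearOrder α] {n : ℕ} (hn : 0 < n) {S : Fin n → α}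
  {SUF : Equiv.Perm (Fin n)} {p i : Fin n}

theorem exists_bwtOf_eq_of_lfOf_lt_of_lt (hSUF : StrictMono fun k => sfx S (SUF k))
    (hp0 : (SUF p : ℕ) ≠ 0) (hi0 : (SUF i : ℕ) ≠ 0)
    (hpb : bwtOf hn S SUF p = bwtOf hn S SUF i) {q : Fin n} (hpq : lfOf hn SUF p < q)
    (hqi : q < lfOf hn SUF i) : ∃ j, p < j ∧ j < i ∧ bwtOf hn S SUF j = bwtOf hn S SUF i := by
  have lower := hSUF hpq
  have upper := hSUF hqi
  simp only [sfx_apply_lfOf hn S SUF hp0, sfx_apply_lfOf hn S SUF hi0, hpb,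
    sfx_eq_cons S (SUF q).isLt, List.cons_lt_cons_iff] at lower upper
  obtain ⟨hc, hp_lt⟩ := lower.resolve_left fun h => by
    rcases upper with h' | ⟨h', -⟩
    exacts [lt_asymm h h', h.ne' h']
  have lt_hi := (upper.resolve_left (hc ▸ lt_irrefl _)).2
  have hq : (SUF q : ℕ) + 1 < n := by
    by_contra h
    rw [(sfx_eq_nil_iff S (k := SUF q + 1)).mpr (by omega)] at hp_lt
    exact List.not_lt_nil _ hp_lt
  refine ⟨SUF.symm ⟨_, hq⟩, hSUF.lt_iff_lt.mp (by simpa using hp_lt),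
    hSUF.lt_iff_lt.mp (by simpa using lt_hi), ?_⟩
  rw [bwtOf_of_ne_zero hn S SUF (by simp), hc]
  simp

theorem val_lfOf_eq_val_lfOf_add_one (hSUF : StrictMono fun k => sfx S (SUF k))
    (hp0 : (SUF p : ℕ) ≠ 0) (hi0 : (SUF i : ℕ) ≠ 0) (hpi : p < i)
    (hpb : bwtOf hn S SUF p = bwtOf hn S SUF i)
    (hpmax : ∀ j : Fin n, j < i → bwtOf hn S SUF j = bwtOf hn S SUF i → j ≤ p) :
    (lfOf hn SUF i : ℕ) = lfOf hn SUF p + 1 := by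
  have hlt : lfOf hn SUF p < lfOf hn SUF i := by
    rw [← hSUF.lt_iff_lt, sfx_apply_lfOf hn S SUF hp0, sfx_apply_lfOf hn S SUF hi0, hpb]
    exact List.cons_lt_cons_iff.mpr (Or.inr ⟨rfl, hSUF hpi⟩)
  by_contra hne
  obtain ⟨j, hpj, hji, hj⟩ := exists_bwtOf_eq_of_lfOf_lt_of_lt hn hSUF hp0 hi0 hpb
    (q := ⟨lfOf hn SUF p + 1, by omega⟩) (Fin.lt_def.mpr (Nat.lt_add_one _))
    (show (lfOf hn SUF p : ℕ) + 1 < lfOf hn SUF i by omega)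
  exact (hpmax j hji hj).not_gt hpj

end LF

/-- If `SUF[i] ≠ 0` and `p = prev(i)` is the largest index `< i` with
`BWT[p] = BWT[i]`, then `LCP[LF[i]] = 1 + min { LCP[l] : p+1 ≤ l ≤ i }`. -/
theorem lcp_lf_eq_one_add_rmq {α : Type*} [LinearOrder α] {n : ℕ} (hn : 0 < n)
    (S : Fin n → α)
    (hsent : ∀ k : Fin n, (k : ℕ) < n - 1 → S ⟨n - 1, by omega⟩ < S k)
    (SUF : Equiv.Perm (Fin n))
    (hSUF : ∀ i j : Fin n, i < j →
      List.Lex (· < ·) (sfx S ((SUF i : Fin n) : ℕ)) (sfx S ((SUF j : Fin n) : ℕ)))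
    (LCP : ℕ → ℕ)
    (hLCP : ∀ l, ∀ _ : 1 ≤ l, ∀ h2 : l < n,
      LCP l = lcpLen (sfx S ((SUF ⟨l - 1, by omega⟩ : Fin n) : ℕ))
                     (sfx S ((SUF ⟨l, h2⟩ : Fin n) : ℕ)))
    (i : Fin n) (hi0 : (SUF i : ℕ) ≠ 0)
    (p : Fin n) (hpi : p < i) (hpb : bwtOf hn S SUF p = bwtOf hn S SUF i)
    (hpmax : ∀ j : Fin n, j < i → bwtOf hn S SUF j = bwtOf hn S SUF i → j ≤ p) :
    LCP ((lfOf hn SUF i : Fin n) : ℕ) =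
      1 + (Finset.Icc ((p : ℕ) + 1) (i : ℕ)).inf'
            (Finset.nonempty_Icc.mpr (by omega)) LCP := by
  have hsorted : StrictMono fun k => sfx S (SUF k) := fun _ _ h => hSUF _ _ h
  have hp0 := val_apply_ne_zero_of_bwtOf_eq hn S SUF hsent hi0 hpb
  have hlf := val_lfOf_eq_val_lfOf_add_one hn hsorted hp0 hi0 hpi hpb hpmax
  have hprev : (⟨(lfOf hn SUF i : ℕ) - 1, by omega⟩ : Fin n) = lfOf hn SUF p :=
    Fin.ext (by simp [hlf])
  rw [hLCP _ (by omega) (lfOf hn SUF i).isLt, hprev, sfx_apply_lfOf hn S SUF hp0,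
    sfx_apply_lfOf hn S SUF hi0, hpb, lcpLen_cons_self,
    lcpLen_eq_inf'_Icc hsorted hLCP hpi i.isLt, add_comm]
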